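/- Let u be a reduced monomial in the presented algebra A_n. Then: (i) between any two consecutive occurrences of E_0 in u there is exactly one letter not commuting with E_0 (namely one occurrence of E_1); (ii) between any two consecutive occurrences of E_n there is exactly one occurrence of E_{n−1}; (iii) between any two consecutive occurrences of E_i for 1 ≤ i ≤ n−1 there are exactly two letters not commuting with E_i, namely one occurrence each of E_{i−1} and E_{i+1}. -/

import Mathlib

open FreeAlgebra

/-- The six parameters `δ, δ_L, δ_R, κ_L, κ_R, κ_{LR}` of the symplectic blob algebra. -/
structure Params (k : Type*) where
  δ : k
  δL : k
  δR : k
  κL : k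
  κR : k
  κLR : k

/-- The word `I`: the product of the odd-indexed generators `E_1 E_3 ⋯`. -/
def Iword (n : ℕ) : List (Fin (n + 1)) :=
  (List.finRange (n + 1)).filter (fun i => i.val % 2 = 1)

/-- The word `J`: the product of the even-indexed generators `E_0 E_2 ⋯`. -/
def Jword (n : ℕ) : List (Fin (n + 1)) :=
  (List.finRange (n + 1)).filter (fun i => i.val % 2 = 0)

/-- The monomial in the free algebra corresponding to a word in the generators. -/
def wordProd (k : Type*) [CommRing k] {n : ℕ} (u : List (Fin (n + 1))) :
    FreeAlgebra k (Fin (n + 1)) :=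
  (u.map (FreeAlgebra.ι k)).prod

/-- The defining relations of the algebra `A_n` (the quotient of the two boundary
Temperley–Lieb algebra by the topological relations `IJI = κ_{LR} I`, `JIJ = κ_{LR} J`),
with `E = E_0` and `F = E_n`. -/
inductive SBRel {k : Type*} [CommRing k] {n : ℕ} (p : Params k) :
    FreeAlgebra k (Fin (n + 1)) → FreeAlgebra k (Fin (n + 1)) → Prop
  | comm (i j : Fin (n + 1)) (h : i.val + 1 < j.val) :
      SBRel p (ι k i * ι k j) (ι k j * ι k i)
  | left_sq :
      SBRel p (ι k (0 : Fin (n + 1)) * ι k 0) (p.δL • ι k (0 : Fin (n + 1)))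
  | right_sq :
      SBRel p (ι k (Fin.last n) * ι k (Fin.last n)) (p.δR • ι k (Fin.last n))
  | mid_sq (i : Fin (n + 1)) (h1 : 1 ≤ i.val) (h2 : i.val < n) :
      SBRel p (ι k i * ι k i) (p.δ • ι k i)
  | left_braid (i j : Fin (n + 1)) (hi : i.val = 1) (hj : j.val = 0) :
      SBRel p (ι k i * ι k j * ι k i) (p.κL • ι k i)
  | right_braid (i j : Fin (n + 1)) (hi : i.val + 1 = n) (hj : j.val = n) :
      SBRel p (ι k i * ι k j * ι k i) (p.κR • ι k i)
  | braid_up (i j : Fin (n + 1)) (h : i.val + 1 = j.val) (h1 : 1 ≤ i.val) (h2 : j.val < n) :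
      SBRel p (ι k i * ι k j * ι k i) (ι k i)
  | braid_down (i j : Fin (n + 1)) (h : i.val + 1 = j.val) (h1 : 1 ≤ i.val) (h2 : j.val < n) :
      SBRel p (ι k j * ι k i * ι k j) (ι k j)
  | topI :
      SBRel p (wordProd k (Iword n ++ Jword n ++ Iword n)) (p.κLR • wordProd k (Iword n))
  | topJ :
      SBRel p (wordProd k (Jword n ++ Iword n ++ Jword n)) (p.κLR • wordProd k (Jword n))

/-- The presented algebra `A_n`. -/
def SBAlg (k : Type*) [CommRing k] (n : ℕ) (p : Params k) :=
  RingQuot (SBRel (k := k) (n := n) p)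

noncomputable instance (k : Type*) [CommRing k] (n : ℕ) (p : Params k) :
    Ring (SBAlg k n p) := inferInstanceAs (Ring (RingQuot (SBRel p)))

noncomputable instance (k : Type*) [CommRing k] (n : ℕ) (p : Params k) :
    Algebra k (SBAlg k n p) := inferInstanceAs (Algebra k (RingQuot (SBRel p)))

/-- The image of a word in the generators in the algebra `A_n`. -/
noncomputable def algWord {k : Type*} [CommRing k] {n : ℕ} (p : Params k)
    (u : List (Fin (n + 1))) : SBAlg k n p :=
  RingQuot.mkAlgHom k (SBRel p) (wordProd k u)

/-- The generator `E_i` of `A_n`. -/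
noncomputable def gen {k : Type*} [CommRing k] {n : ℕ} (p : Params k) (i : Fin (n + 1)) :
    SBAlg k n p :=
  RingQuot.mkAlgHom k (SBRel p) (ι k i)

/-- A monomial `u` in the generators is *reduced* if it cannot be expressed, using the
relations, as a scalar multiple of a strictly shorter monomial. -/
def Reduced {k : Type*} [CommRing k] {n : ℕ} (p : Params k) (u : List (Fin (n + 1))) :
    Prop :=
  ∀ (v : List (Fin (n + 1))) (c : k), v.length < u.length → algWord p u ≠ c • algWord p v

/-- The generators `E_i` and `E_j` do not commute: `|i - j| = 1`. -/
def Adj {n : ℕ} (i j : Fin (n + 1)) : Prop :=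
  i.val + 1 = j.val ∨ j.val + 1 = i.val


/-!
Two consecutive occurrences of `E_i` with no neighbour `E_{i±1}` between them can be brought
together by commutations, and `E_i² = c E_i` shortens the word; if exactly one neighbour `E_j`
occurs between them, commuting brings the factor `E_i E_j E_i = c E_i` together and again
shortens the word (for an interior `i`; at the ends there is only one neighbour). Hence in a
reduced word every neighbour of `E_i` occurs between two consecutive occurrences of `E_i`, by
strong induction on the length of the gap: if the other neighbour `E_o` occurred twice, the
gap between two consecutive `E_o` would be shorter and would have to contain `E_i`. The same
argument shows that no neighbour occurs twice.
-/

lemma Adj.symm {n : ℕ} {i j : Fin (n + 1)} (h : Adj i j) : Adj j i := Or.symm h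

lemma Adj.interior_of_ne {n : ℕ} {i j o : Fin (n + 1)} (hj : Adj j i) (ho : Adj o i)
    (hne : o ≠ j) : 1 ≤ i.val ∧ i.val < n := by
  rw [Ne, Fin.ext_iff] at hne
  unfold Adj at hj ho
  omega

lemma Adj.eq_of_ne {n : ℕ} {i j o x : Fin (n + 1)} (hj : Adj j i) (ho : Adj o i)
    (hx : Adj x i) (hoj : o ≠ j) (hxj : x ≠ j) : x = o := by
  rw [Ne, Fin.ext_iff] at hoj hxj
  rw [Fin.ext_iff]
  unfold Adj at hj ho hx
  omega

lemma List.exists_eq_append_cons_append_cons_of_two_le_count {α : Type*} [DecidableEq α]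
    {a : α} {l : List α} (h : 2 ≤ l.count a) :
    ∃ x y z, l = x ++ a :: (y ++ a :: z) ∧ a ∉ y := by
  obtain ⟨x, t, rfl, hx⟩ :=
    List.eq_append_cons_of_mem (List.count_pos_iff.1 (by omega : 0 < l.count a))
  rw [List.count_append, List.count_cons_self, List.count_eq_zero.2 hx] at h
  obtain ⟨y, z, rfl, hy⟩ :=
    List.eq_append_cons_of_mem (List.count_pos_iff.1 (by omega : 0 < t.count a))
  exact ⟨x, y, z, rfl, hy⟩

lemma List.countP_eq_count_of_forall_iff {α : Type*} [DecidableEq α] {l : List α}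
    {P : α → Bool} {a : α} (h : ∀ x, P x ↔ x = a) : l.countP P = l.count a :=
  List.countP_congr fun x _ => by simp [h]

section Algebra

variable {k : Type*} [CommRing k] {n : ℕ} (p : Params k)

lemma algWord_nil : algWord p ([] : List (Fin (n + 1))) = 1 :=
  map_one _

lemma algWord_cons (i : Fin (n + 1)) (u : List (Fin (n + 1))) :
    algWord p (i :: u) = gen p i * algWord p u :=
  map_mul _ _ _

lemma algWord_append (u v : List (Fin (n + 1))) :
    algWord p (u ++ v) = algWord p u * algWord p v := by
  unfold algWord wordProd
  rw [List.map_append, List.prod_append]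
  exact map_mul _ _ _

lemma commute_gen_of_not_adj {i j : Fin (n + 1)} (hne : i ≠ j) (hadj : ¬Adj i j) :
    Commute (gen p i) (gen p j) := by
  rw [Ne, Fin.ext_iff] at hne
  unfold Adj at hadj
  rcases Nat.lt_or_gt_of_ne hne with h | h
  · have h := RingQuot.mkAlgHom_rel k (SBRel.comm (p := p) i j (by omega))
    rwa [map_mul, map_mul] at h
  · have h := RingQuot.mkAlgHom_rel k (SBRel.comm (p := p) j i (by omega))
    rw [map_mul, map_mul] at h
    exact h.symm

lemma commute_gen_algWord {i : Fin (n + 1)} {u : List (Fin (n + 1))} (hi : i ∉ u)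
    (hadj : ∀ x ∈ u, ¬Adj x i) : Commute (gen p i) (algWord p u) := by
  induction u with
  | nil => rw [algWord_nil]; exact Commute.one_right _
  | cons x u ih =>
    simp only [List.mem_cons, not_or, forall_eq_or_imp] at hi hadj
    rw [algWord_cons]
    exact (commute_gen_of_not_adj p hi.1 fun h => hadj.1 h.symm).mul_right (ih hi.2 hadj.2)

lemma exists_gen_mul_self (i : Fin (n + 1)) : ∃ c : k, gen p i * gen p i = c • gen p i := by
  by_cases h0 : i = 0
  · subst h0
    have h := RingQuot.mkAlgHom_rel k (SBRel.left_sq (p := p) (n := n))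
    exact ⟨p.δL, by rwa [map_mul, map_smul] at h⟩
  by_cases hn : i = Fin.last n
  · subst hn
    have h := RingQuot.mkAlgHom_rel k (SBRel.right_sq (p := p) (n := n))
    exact ⟨p.δR, by rwa [map_mul, map_smul] at h⟩
  rw [Fin.ext_iff, Fin.val_last] at hn
  have h := RingQuot.mkAlgHom_rel k
    (SBRel.mid_sq (p := p) i (Nat.one_le_iff_ne_zero.2 fun h => h0 (Fin.ext h)) (by omega))
  exact ⟨p.δ, by rwa [map_mul, map_smul] at h⟩

lemma exists_gen_mul_gen_mul_gen {i j : Fin (n + 1)} (h₁ : 1 ≤ i.val) (h₂ : i.val < n)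
    (hj : Adj j i) : ∃ c : k, gen p i * gen p j * gen p i = c • gen p i := by
  have hjn := j.isLt
  unfold Adj at hj
  rcases hj with hj | hj
  · by_cases h0 : j.val = 0
    · have h := RingQuot.mkAlgHom_rel k (SBRel.left_braid (p := p) i j (by omega) h0)
      exact ⟨p.κL, by rwa [map_mul, map_mul, map_smul] at h⟩
    · have h := RingQuot.mkAlgHom_rel k (SBRel.braid_down (p := p) j i hj (by omega) h₂)
      exact ⟨1, by rw [one_smul]; rwa [map_mul, map_mul] at h⟩
  · by_cases hn : j.val = n
    · have h := RingQuot.mkAlgHom_rel k (SBRel.right_braid (p := p) i j (by omega) hn)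
      exact ⟨p.κR, by rwa [map_mul, map_mul, map_smul] at h⟩
    · have h := RingQuot.mkAlgHom_rel k (SBRel.braid_up (p := p) i j hj h₁ (by omega))
      exact ⟨1, by rw [one_smul]; rwa [map_mul, map_mul] at h⟩

def IsGap (i : Fin (n + 1)) (u₂ : List (Fin (n + 1))) : Prop :=
  i ∉ u₂ ∧ ∃ u₁ u₃, Reduced p (u₁ ++ i :: (u₂ ++ i :: u₃))

variable {p}

lemma IsGap.exists_adj {i : Fin (n + 1)} {u₂ : List (Fin (n + 1))} (h : IsGap p i u₂) :
    ∃ x ∈ u₂, Adj x i := by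
  by_contra! hadj
  obtain ⟨hi, u₁, u₃, hred⟩ := h
  obtain ⟨c, hc⟩ := exists_gen_mul_self p i
  refine hred (u₁ ++ u₂ ++ i :: u₃) c (by simp) ?_
  simp only [algWord_append, algWord_cons, mul_assoc]
  rw [(commute_gen_algWord p hi hadj).left_comm, ← mul_assoc (gen p i), hc, smul_mul_assoc,
    mul_smul_comm, mul_smul_comm]

lemma IsGap.false_of_unique_adj {i j : Fin (n + 1)} {u₂ : List (Fin (n + 1))}
    (h : IsGap p i u₂) (h₁ : 1 ≤ i.val) (h₂ : i.val < n) (hj : Adj j i)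
    (hcount : u₂.count j = 1) (hadj : ∀ x ∈ u₂, Adj x i → x = j) : False := by
  obtain ⟨hi, u₁, u₃, hred⟩ := h
  obtain ⟨a, b, rfl, hja⟩ :=
    List.eq_append_cons_of_mem (List.count_pos_iff.1 (by omega : 0 < u₂.count j))
  rw [List.count_append, List.count_cons_self, List.count_eq_zero.2 hja] at hcount
  have hjb : j ∉ b := List.count_eq_zero.1 (by omega)
  have hcomm : ∀ v ⊆ a ++ j :: b, j ∉ v → Commute (gen p i) (algWord p v) := fun v hv hjv =>
    commute_gen_algWord p (fun hiv => hi (hv hiv))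
      (fun x hx hxi => hjv (hadj x (hv hx) hxi ▸ hx))
  obtain ⟨c, hc⟩ := exists_gen_mul_gen_mul_gen p h₁ h₂ hj
  refine hred (u₁ ++ a ++ i :: (b ++ u₃)) c (by simp) ?_
  have ha := hcomm a (by simp) hja
  have hb := hcomm b (by simp) hjb
  simp only [algWord_append, algWord_cons, mul_assoc]
  rw [← hb.left_comm, ha.left_comm, ← mul_assoc (gen p i) (gen p j),
    ← mul_assoc (gen p i * gen p j), hc, smul_mul_assoc, mul_smul_comm, mul_smul_comm]

lemma IsGap.exists_shorter_of_two_le_count {i j : Fin (n + 1)} {u₂ : List (Fin (n + 1))}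
    (h : IsGap p i u₂) (hj : 2 ≤ u₂.count j) :
    ∃ y, IsGap p j y ∧ y.length < u₂.length ∧ i ∉ y := by
  obtain ⟨hi, u₁, u₃, hred⟩ := h
  obtain ⟨x, y, z, rfl, hjy⟩ := List.exists_eq_append_cons_append_cons_of_two_le_count hj
  refine ⟨y, ⟨hjy, u₁ ++ i :: x, z ++ i :: u₃, by simpa using hred⟩, by simp; omega,
    fun hiy => hi (by simp [hiy])⟩

lemma IsGap.mem_of_adj {i j : Fin (n + 1)} {u₂ : List (Fin (n + 1))} (h : IsGap p i u₂)
    (hj : Adj j i) : j ∈ u₂ := by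
  induction hlen : u₂.length using Nat.strong_induction_on generalizing i j u₂ with
  | _ len ih =>
  by_contra hju
  obtain ⟨o, hou, hoi⟩ := h.exists_adj
  have hoj : o ≠ j := fun hoj => hju (hoj ▸ hou)
  obtain ⟨h₁, h₂⟩ := hj.interior_of_ne hoi hoj
  -- Two `E_o` in the gap would enclose a shorter gap of `o` without its neighbour `i`.
  have hcount : u₂.count o ≤ 1 := by
    by_contra! htwo
    obtain ⟨y, hy, hylen, hiy⟩ := h.exists_shorter_of_two_le_count htwo
    exact hiy (ih _ (hlen ▸ hylen) hy hoi.symm rfl)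
  refine h.false_of_unique_adj h₁ h₂ hoi
    (le_antisymm hcount (List.one_le_count_iff.2 hou)) fun x hx hxi => ?_
  exact hj.eq_of_ne hoi hxi hoj fun hxj => hju (hxj ▸ hx)

lemma IsGap.count_eq_one_of_adj {i j : Fin (n + 1)} {u₂ : List (Fin (n + 1))}
    (h : IsGap p i u₂) (hj : Adj j i) : u₂.count j = 1 := by
  refine le_antisymm ?_ (List.one_le_count_iff.2 (h.mem_of_adj hj))
  by_contra! htwo
  obtain ⟨y, hy, -, hiy⟩ := h.exists_shorter_of_two_le_count htwo
  exact hiy (hy.mem_of_adj hj.symm)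

end Algebra

theorem between_consecutive_occurrences_general {k : Type*} [Field k] {n : ℕ}
    (p : Params k) (u₁ u₂ u₃ : List (Fin (n + 1))) (i : Fin (n + 1))
    (hred : Reduced p (u₁ ++ i :: (u₂ ++ i :: u₃)))
    (hcons : i ∉ u₂) :
    (i.val = 0 →
      u₂.countP (fun g => g.val == 1) = 1 ∧ ∀ g ∈ u₂, Adj g i → g.val = 1) ∧
    (i.val = n →
      u₂.countP (fun g => g.val + 1 == n) = 1 ∧ ∀ g ∈ u₂, Adj g i → g.val + 1 = n) ∧
    (1 ≤ i.val → i.val < n →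
      u₂.countP (fun g => g.val + 1 == i.val) = 1 ∧
      u₂.countP (fun g => g.val == i.val + 1) = 1 ∧
      ∀ g ∈ u₂, Adj g i → g.val + 1 = i.val ∨ g.val = i.val + 1) := by
  have hgap : IsGap p i u₂ := ⟨hcons, u₁, u₃, hred⟩
  have hcount : ∀ j, Adj j i → ∀ P : Fin (n + 1) → Bool, (∀ g, P g ↔ g.val = j.val) →
      u₂.countP P = 1 := fun j hj P hP => by
    rw [List.countP_eq_count_of_forall_iff fun g => (hP g).trans Fin.ext_iff.symm]
    exact hgap.count_eq_one_of_adj hj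
  obtain ⟨x, -, hx⟩ := hgap.exists_adj
  have hin := i.isLt
  unfold Adj at *
  refine ⟨fun hi => ⟨hcount x hx _ fun g => ?_, fun g _ hg => ?_⟩,
    fun hi => ⟨hcount x hx _ fun g => ?_, fun g _ hg => ?_⟩,
    fun hi₁ hi₂ => ⟨hcount ⟨i.val - 1, by omega⟩ (by dsimp only; omega) _ fun g => ?_,
      hcount ⟨i.val + 1, by omega⟩ (by dsimp only; omega) _ fun g => ?_,
      fun g _ hg => ?_⟩⟩ <;>
  grind

/-- Let `u` be a reduced monomial written `u = u₁ E_i u₂ E_i u₃` with the two displayed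
occurrences of `E_i` consecutive.  Then: (i) if `i = 0`, between them there is exactly
one letter not commuting with `E_0`, namely one occurrence of `E_1`; (ii) if `i = n`,
exactly one occurrence of `E_{n-1}`; (iii) if `1 ≤ i ≤ n-1`, exactly two letters not
commuting with `E_i`, namely one occurrence each of `E_{i-1}` and `E_{i+1}`. -/
theorem between_consecutive_occurrences {k : Type*} [Field k] {n : ℕ} (hn : 1 ≤ n)
    (p : Params k) (u₁ u₂ u₃ : List (Fin (n + 1))) (i : Fin (n + 1))
    (hred : Reduced p (u₁ ++ i :: (u₂ ++ i :: u₃)))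
    (hcons : i ∉ u₂) :
    (i.val = 0 →
      u₂.countP (fun g => g.val == 1) = 1 ∧ ∀ g ∈ u₂, Adj g i → g.val = 1) ∧
    (i.val = n →
      u₂.countP (fun g => g.val + 1 == n) = 1 ∧ ∀ g ∈ u₂, Adj g i → g.val + 1 = n) ∧
    (1 ≤ i.val → i.val < n →
      u₂.countP (fun g => g.val + 1 == i.val) = 1 ∧
      u₂.countP (fun g => g.val == i.val + 1) = 1 ∧
      ∀ g ∈ u₂, Adj g i → g.val + 1 = i.val ∨ g.val = i.val + 1) :=
  between_consecutive_occurrences_general p u₁ u₂ u₃ i hred hcons
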